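/- arXiv:2411.14027 — 2 statements merged into one kernel-verified Lean document; each statement's English description precedes it below -/
import Mathlib

section
/- Let F be an ultrafilter in the idempotent semilattice E(S_{G,Λ}). Then for each F₀ ∈ F there exists a unique triple (λ, e_G, λ) ∈ F₀ such that ι_λ intersects E (i.e., ι_λ E ≠ 0) for all E ∈ F; moreover this ι_λ belongs to F. -/
/-- A `k`-graph: a countable small category with degree functor to `ℕ^k`
satisfying the unique factorization property.  Objects (vertices) are
identified with the paths of degree `0`. -/
structure KGraph (k : ℕ) where
  Path : Type
  countable : Countable Path
  src : Path → Path
  rng : Path → Path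
  deg : Path → Fin k → ℕ
  comp : (μ ν : Path) → src μ = rng ν → Path
  deg_src : ∀ μ, deg (src μ) = 0
  deg_rng : ∀ μ, deg (rng μ) = 0
  src_vtx : ∀ μ, deg μ = 0 → src μ = μ
  rng_vtx : ∀ μ, deg μ = 0 → rng μ = μ
  src_comp : ∀ μ ν h, src (comp μ ν h) = src ν
  rng_comp : ∀ μ ν h, rng (comp μ ν h) = rng μ
  deg_comp : ∀ μ ν h, deg (comp μ ν h) = deg μ + deg ν
  comp_assoc : ∀ μ ν ρ (h1 : src μ = rng ν) (h2 : src (comp μ ν h1) = rng ρ)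
    (h3 : src ν = rng ρ) (h4 : src μ = rng (comp ν ρ h3)),
    comp (comp μ ν h1) ρ h2 = comp μ (comp ν ρ h3) h4
  rng_id_comp : ∀ μ (h : src (rng μ) = rng μ), comp (rng μ) μ h = μ
  comp_src_id : ∀ μ (h : src μ = rng (src μ)), comp μ (src μ) h = μ
  factor : ∀ μ (m n : Fin k → ℕ), deg μ = m + n →
    ∃! p : Path × Path, ∃ h : src p.1 = rng p.2,
      deg p.1 = m ∧ deg p.2 = n ∧ comp p.1 p.2 h = μ

namespace KGraph

variable {k : ℕ}

/-- The set `Λ^min(μ,ν)` of pairs `(α,β)` with `μα = νβ` a minimal common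
extension of `μ` and `ν`. -/
def lmin (Λ : KGraph k) (μ ν : Λ.Path) : Set (Λ.Path × Λ.Path) :=
  {p | ∃ (h1 : Λ.src μ = Λ.rng p.1) (h2 : Λ.src ν = Λ.rng p.2),
    Λ.comp μ p.1 h1 = Λ.comp ν p.2 h2 ∧
    Λ.deg μ + Λ.deg p.1 = Λ.deg μ ⊔ Λ.deg ν}

/-- `Λ` is finitely aligned when every `Λ^min(μ,ν)` is finite. -/
def FinitelyAligned (Λ : KGraph k) : Prop := ∀ μ ν : Λ.Path, (Λ.lmin μ ν).Finite

/-- `X ⊆ vΛ` is exhaustive: every path with range `v` has a minimal common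
extension with some member of `X`. -/
def Exhaustive (Λ : KGraph k) (v : Λ.Path) (X : Set Λ.Path) : Prop :=
  ∀ lam : Λ.Path, Λ.rng lam = v → ∃ τ ∈ X, Λ.lmin lam τ ≠ ∅

/-- `Λ` is row finite: finitely many edges of each colour into each vertex. -/
def RowFinite (Λ : KGraph k) : Prop :=
  ∀ v : Λ.Path, Λ.deg v = 0 → ∀ i : Fin k,
    {e : Λ.Path | Λ.deg e = Pi.single i 1 ∧ Λ.rng e = v}.Finite

/-- `Λ` has no sources: every vertex receives an edge of each colour. -/
def NoSources (Λ : KGraph k) : Prop :=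
  ∀ v : Λ.Path, Λ.deg v = 0 → ∀ i : Fin k,
    {e : Λ.Path | Λ.deg e = Pi.single i 1 ∧ Λ.rng e = v}.Nonempty

end KGraph

/-- A self-similar `k`-graph `(G,Λ,φ)`. -/
structure SelfSimilar (k : ℕ) (G : Type) [Group G] (Λ : KGraph k) where
  act : G → Λ.Path → Λ.Path
  φ : G → Λ.Path → G
  act_one : ∀ μ, act 1 μ = μ
  act_mul : ∀ g h μ, act (g * h) μ = act g (act h μ)
  deg_act : ∀ g μ, Λ.deg (act g μ) = Λ.deg μ
  src_act : ∀ g μ, Λ.src (act g μ) = act g (Λ.src μ)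
  rng_act : ∀ g μ, Λ.rng (act g μ) = act g (Λ.rng μ)
  φ_mul : ∀ g h μ, φ (g * h) μ = φ g (act h μ) * φ h μ
  act_comp : ∀ g μ ν (h : Λ.src μ = Λ.rng ν)
      (h' : Λ.src (act g μ) = Λ.rng (act (φ g μ) ν)),
      act g (Λ.comp μ ν h) = Λ.comp (act g μ) (act (φ g μ) ν) h'
  φ_comp : ∀ g μ ν (h : Λ.src μ = Λ.rng ν),
      φ g (Λ.comp μ ν h) = φ (φ g μ) ν
  φ_vtx : ∀ g v, Λ.deg v = 0 → φ g v = g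

variable {k : ℕ} {G : Type} [Group G] {Λ : KGraph k}

/-- Orthogonality of two triples: `Λ^min(μ,ξ) = Λ^min(ν,η) = ∅`. -/
def Orth (Λ : KGraph k) (t u : Λ.Path × G × Λ.Path) : Prop :=
  Λ.lmin t.1 u.1 = ∅ ∧ Λ.lmin t.2.2 u.2.2 = ∅

/-- Membership in `S_{G,Λ}`: a finite set of pairwise orthogonal triples
`(μ,g,ν)` with `s(μ) = g⬝s(ν)`. -/
def IsElem (SS : SelfSimilar k G Λ) (F : Set (Λ.Path × G × Λ.Path)) : Prop :=
  F.Finite ∧ (∀ t ∈ F, Λ.src t.1 = SS.act t.2.1 (Λ.src t.2.2)) ∧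
    ∀ t ∈ F, ∀ u ∈ F, t ≠ u → Orth Λ t u

/-- The multiplication of `S_{G,Λ}`. -/
def smul (SS : SelfSimilar k G Λ) (E F : Set (Λ.Path × G × Λ.Path)) :
    Set (Λ.Path × G × Λ.Path) :=
  {t | ∃ μ g ν ξ h η α β, (μ, g, ν) ∈ E ∧ (ξ, h, η) ∈ F ∧ (α, β) ∈ Λ.lmin ν ξ ∧
    ∃ (h1 : Λ.src μ = Λ.rng (SS.act g α)) (h2 : Λ.src η = Λ.rng (SS.act h⁻¹ β)),
      t = (Λ.comp μ (SS.act g α) h1,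
           SS.φ g α * SS.φ h (SS.act h⁻¹ β),
           Λ.comp η (SS.act h⁻¹ β) h2)}

/-- The involution `F* = {(ν,g⁻¹,μ) : (μ,g,ν) ∈ F}`. -/
def sstar (F : Set (Λ.Path × G × Λ.Path)) : Set (Λ.Path × G × Λ.Path) :=
  {t | (t.2.2, t.2.1⁻¹, t.1) ∈ F}

/-- The singleton idempotent `ι_μ = {(μ,e_G,μ)}`. -/
def iota (Λ : KGraph k) (G : Type) [Group G] (μ : Λ.Path) :
    Set (Λ.Path × G × Λ.Path) := {(μ, (1 : G), μ)}

/-- Idempotents of `S_{G,Λ}`. -/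
def IsIdem (SS : SelfSimilar k G Λ) (E : Set (Λ.Path × G × Λ.Path)) : Prop :=
  IsElem SS E ∧ smul SS E E = E

/-- The natural partial order of the inverse semigroup `S_{G,Λ}`:
`s ≤ t` iff `s = te` for some idempotent `e`. -/
def leS (SS : SelfSimilar k G Λ) (s t : Set (Λ.Path × G × Λ.Path)) : Prop :=
  ∃ E, IsIdem SS E ∧ smul SS t E = s

/-- `τ` is strongly fixed by `g`. -/
def StronglyFixed (SS : SelfSimilar k G Λ) (g : G) (τ : Λ.Path) : Prop :=
  SS.act g τ = τ ∧ SS.φ g τ = 1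

/-- The set `SF_g` of paths strongly fixed by `g`. -/
def SFg (SS : SelfSimilar k G Λ) (g : G) : Set Λ.Path :=
  {τ | SS.act g τ = τ ∧ SS.φ g τ = 1}

/-- `SF_g` is locally exhausted. -/
def LocallyExhausted (SS : SelfSimilar k G Λ) (g : G) : Prop :=
  ∀ v : Λ.Path, Λ.deg v = 0 →
    ∃ M : Set Λ.Path, M.Finite ∧ (∀ τ ∈ M, τ ∈ SFg SS g ∧ Λ.rng τ = v) ∧
      ∀ τ ∈ SFg SS g, Λ.rng τ = v → ∃ τ' ∈ M, Λ.lmin τ τ' ≠ ∅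

/-- The principal ideal `J_F` admits a finite cover. -/
def HasFiniteCover (SS : SelfSimilar k G Λ) (F : Set (Λ.Path × G × Λ.Path)) : Prop :=
  ∃ C : Set (Set (Λ.Path × G × Λ.Path)), C.Finite ∧
    (∀ E ∈ C, IsIdem SS E ∧ smul SS F E = E) ∧
    ∀ E, IsIdem SS E → smul SS F E = E → E ≠ ∅ → ∃ E' ∈ C, smul SS E E' ≠ ∅

/-- A (proper, nonzero) filter in the idempotent semilattice `E(S_{G,Λ})`. -/
def IsFilterE (SS : SelfSimilar k G Λ) (𝓕 : Set (Set (Λ.Path × G × Λ.Path))) : Prop :=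
  𝓕.Nonempty ∧ (∀ E ∈ 𝓕, IsIdem SS E) ∧ (∅ ∉ 𝓕) ∧
    (∀ E ∈ 𝓕, ∀ F ∈ 𝓕, smul SS E F ∈ 𝓕) ∧
    ∀ E ∈ 𝓕, ∀ F, IsIdem SS F → smul SS F E = E → F ∈ 𝓕

/-- An ultrafilter: a maximal filter in `E(S_{G,Λ})`. -/
def IsUltrafilterE (SS : SelfSimilar k G Λ) (𝓕 : Set (Set (Λ.Path × G × Λ.Path))) : Prop :=
  IsFilterE SS 𝓕 ∧ ∀ 𝓖, IsFilterE SS 𝓖 → 𝓕 ⊆ 𝓖 → 𝓖 = 𝓕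

/-- `n ≤ m` for `m ∈ (ℕ ∪ {∞})^k` and `n ∈ ℕ^k`. -/
def LeDeg {k : ℕ} (m : Fin k → ℕ∞) (n : Fin k → ℕ) : Prop :=
  ∀ i, (n i : ℕ∞) ≤ m i

/-- A boundary path `x` of a finitely aligned `k`-graph, recorded via its
degree `d(x) ∈ (ℕ∪{∞})^k` and its initial segments `x(0,n)` for `n ≤ d(x)`. -/
structure BoundaryPath (Λ : KGraph k) where
  bdeg : Fin k → ℕ∞
  seg : (Fin k → ℕ) → Λ.Path
  deg_seg : ∀ n, LeDeg bdeg n → Λ.deg (seg n) = n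
  rng_seg : ∀ n, LeDeg bdeg n → Λ.rng (seg n) = seg 0
  seg_comp : ∀ m n : Fin k → ℕ, LeDeg bdeg (m + n) →
    ∃ (τ : Λ.Path) (h : Λ.src (seg m) = Λ.rng τ),
      Λ.deg τ = n ∧ seg (m + n) = Λ.comp (seg m) τ h
  seg_junk : ∀ n, ¬ LeDeg bdeg n → seg n = seg 0
  boundary : ∀ n, LeDeg bdeg n → ∀ X : Set Λ.Path, X.Finite →
    (∀ τ ∈ X, Λ.rng τ = Λ.src (seg n) ∧ τ ≠ Λ.src (seg n)) →
    KGraph.Exhaustive Λ (Λ.src (seg n)) X →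
    ∃ τ ∈ X, ∃ (_ : LeDeg bdeg (n + Λ.deg τ)) (h : Λ.src (seg n) = Λ.rng τ),
      seg (n + Λ.deg τ) = Λ.comp (seg n) τ h

/-- `z = σ^n(x)`, the shift of the boundary path `x` by `n`. -/
def IsShift (Λ : KGraph k) (x : BoundaryPath Λ) (n : Fin k → ℕ)
    (z : BoundaryPath Λ) : Prop :=
  (∀ i, z.bdeg i = x.bdeg i - (n i : ℕ∞)) ∧
    ∀ p, LeDeg z.bdeg p → ∃ h : Λ.src (x.seg n) = Λ.rng (z.seg p),
      x.seg (n + p) = Λ.comp (x.seg n) (z.seg p) h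

/-- `z = g⬝x` for boundary paths. -/
def IsActB (SS : SelfSimilar k G Λ) (g : G) (x z : BoundaryPath Λ) : Prop :=
  z.bdeg = x.bdeg ∧ ∀ p, LeDeg x.bdeg p → z.seg p = SS.act g (x.seg p)

/-- `y = lam⬝z`, the concatenation of a finite path with a boundary path. -/
def IsCompB (Λ : KGraph k) (lam : Λ.Path) (z y : BoundaryPath Λ) : Prop :=
  (∀ i, y.bdeg i = (Λ.deg lam i : ℕ∞) + z.bdeg i) ∧
    ∀ p, LeDeg z.bdeg p → ∃ h : Λ.src lam = Λ.rng (z.seg p),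
      y.seg (Λ.deg lam + p) = Λ.comp lam (z.seg p) h

/-- `x ∈ Z(lam)`, i.e. `x(0,d(lam)) = lam`. -/
def InZ (Λ : KGraph k) (x : BoundaryPath Λ) (lam : Λ.Path) : Prop :=
  LeDeg x.bdeg (Λ.deg lam) ∧ x.seg (Λ.deg lam) = lam

/-- `y` is a fixed point for `θ_{{(μ,g,ν)}}`: `y ∈ Z(ν)` and `μ(g⬝σ^{d(ν)}(y)) = y`. -/
def FixedPt (SS : SelfSimilar k G Λ) (μ : Λ.Path) (g : G) (ν : Λ.Path)
    (y : BoundaryPath Λ) : Prop :=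
  InZ Λ y ν ∧ ∃ z w, IsShift Λ y (Λ.deg ν) z ∧ IsActB SS g z w ∧ IsCompB Λ μ w y

/-- `y` is an interior fixed point for `θ_{{(μ,g,ν)}}`: some cylinder containing
`y` consists entirely of fixed points. -/
def InteriorFixedPt (SS : SelfSimilar k G Λ) (μ : Λ.Path) (g : G) (ν : Λ.Path)
    (y : BoundaryPath Λ) : Prop :=
  ∃ η : Λ.Path, InZ Λ y η ∧ ∀ y', InZ Λ y' η → FixedPt SS μ g ν y'

/-- `G`-aperiodic condition (A). -/
def CondA (SS : SelfSimilar k G Λ) : Prop :=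
  ∀ v : Λ.Path, Λ.deg v = 0 → ∃ x : BoundaryPath Λ, x.seg 0 = v ∧
    ∀ (m n : Fin k → ℕ), LeDeg x.bdeg m → LeDeg x.bdeg n →
      ∀ (g : G) (z w : BoundaryPath Λ),
        IsShift Λ x m z → IsShift Λ x n w → IsActB SS g w z → m = n

/-- `(G,Λ)` is `G`-cofinal. -/
def GCofinal (SS : SelfSimilar k G Λ) : Prop :=
  ∀ v : Λ.Path, Λ.deg v = 0 → ∀ x : BoundaryPath Λ,
    ∃ n : Fin k → ℕ, LeDeg x.bdeg n ∧ ∃ (g : G) (p : Λ.Path),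
      Λ.rng p = v ∧ Λ.src p = SS.act g (Λ.src (x.seg n))

/-- The ultrafilter `F_x` associated to a boundary path `x`. -/
def Fx (SS : SelfSimilar k G Λ) (x : BoundaryPath Λ) :
    Set (Set (Λ.Path × G × Λ.Path)) :=
  {E | IsIdem SS E ∧ ∃ n : Fin k → ℕ, LeDeg x.bdeg n ∧
    (x.seg n, (1 : G), x.seg n) ∈ E}


/-! ### Auxiliary machinery -/

section Aux

/-- `ρ` extends `τ`. -/
def PExt (Λ : KGraph k) (ρ τ : Λ.Path) : Prop :=
  ∃ (a : Λ.Path) (h : Λ.src τ = Λ.rng a), ρ = Λ.comp τ a h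

lemma comp_eq_comp {μ ν ν' : Λ.Path} (hvv : ν = ν') (h : Λ.src μ = Λ.rng ν)
    (h' : Λ.src μ = Λ.rng ν') : Λ.comp μ ν h = Λ.comp μ ν' h' := by
  subst hvv; rfl

lemma comp_eq_comp' {μ μ' ν : Λ.Path} (hvv : μ = μ') (h : Λ.src μ = Λ.rng ν)
    (h' : Λ.src μ' = Λ.rng ν) : Λ.comp μ ν h = Λ.comp μ' ν h' := by
  subst hvv; rfl

lemma pext_refl (ρ : Λ.Path) : PExt Λ ρ ρ :=
  ⟨Λ.src ρ, (Λ.rng_vtx _ (Λ.deg_src ρ)).symm, (Λ.comp_src_id ρ _).symm⟩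

lemma pext_trans {ρ σ τ : Λ.Path} (h1 : PExt Λ ρ σ) (h2 : PExt Λ σ τ) : PExt Λ ρ τ := by
  obtain ⟨a, ha, rfl⟩ := h1
  obtain ⟨b, hb, rfl⟩ := h2
  have ha' : Λ.src b = Λ.rng a := by rwa [Λ.src_comp] at ha
  have h4 : Λ.src τ = Λ.rng (Λ.comp b a ha') := by rw [Λ.rng_comp]; exact hb
  exact ⟨Λ.comp b a ha', h4, Λ.comp_assoc τ b a hb ha ha' h4⟩

lemma pext_deg {ρ τ : Λ.Path} (h : PExt Λ ρ τ) : ∃ d, Λ.deg ρ = Λ.deg τ + d := by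
  obtain ⟨a, ha, rfl⟩ := h
  exact ⟨Λ.deg a, Λ.deg_comp _ _ _⟩

lemma pext_deg_le {ρ τ : Λ.Path} (h : PExt Λ ρ τ) : Λ.deg τ ≤ Λ.deg ρ := by
  obtain ⟨d, hd⟩ := pext_deg h
  rw [hd]
  exact Pi.le_def.mpr fun i => by simp only [Pi.add_apply]; omega

lemma pext_self_eq {σ ρ : Λ.Path} (h : PExt Λ σ ρ) (hd : Λ.deg σ = Λ.deg ρ) : σ = ρ := by
  obtain ⟨a, ha, rfl⟩ := h
  have hda : Λ.deg a = 0 := by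
    have h2 := Λ.deg_comp ρ a ha
    rw [hd] at h2
    funext i
    have := congrFun h2 i
    simp only [Pi.add_apply, Pi.zero_apply] at this ⊢
    omega
  have haa : a = Λ.src ρ := by rw [← Λ.rng_vtx a hda, ← ha]
  rw [comp_eq_comp haa ha (haa ▸ ha), Λ.comp_src_id]

/-- Any initial segment of a path, with the universal property for sub-prefixes. -/
lemma exists_prefix (ρ : Λ.Path) (m : Fin k → ℕ) (hm : m ≤ Λ.deg ρ) :
    ∃ σ, PExt Λ ρ σ ∧ Λ.deg σ = m ∧ ∀ ξ, PExt Λ ρ ξ → Λ.deg ξ ≤ m → PExt Λ σ ξ := by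
  have hdeg : Λ.deg ρ = m + (Λ.deg ρ - m) := by
    funext i; have := Pi.le_def.mp hm i; simp only [Pi.add_apply, Pi.sub_apply]; omega
  obtain ⟨⟨σ, σ'⟩, ⟨hs, hdσ, hdσ', hc⟩, _⟩ := Λ.factor ρ m (Λ.deg ρ - m) hdeg
  refine ⟨σ, ⟨σ', hs, hc.symm⟩, hdσ, ?_⟩
  rintro ξ ⟨c, hcξ, hρc⟩ hξm
  have hξσ : Λ.deg ξ ≤ Λ.deg σ := hdσ ▸ hξm
  have hdσ2 : Λ.deg σ = Λ.deg ξ + (Λ.deg σ - Λ.deg ξ) := by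
    funext i; have := Pi.le_def.mp hξσ i; simp only [Pi.add_apply, Pi.sub_apply]; omega
  obtain ⟨⟨ξ₁, u⟩, ⟨hs2, hdξ₁, hdu, hc2⟩, _⟩ :=
    Λ.factor σ (Λ.deg ξ) (Λ.deg σ - Λ.deg ξ) hdσ2
  have hs3 : Λ.src u = Λ.rng σ' := by rw [← hc2, Λ.src_comp] at hs; exact hs
  have hs5 : Λ.src (Λ.comp ξ₁ u hs2) = Λ.rng σ' := by rw [hc2]; exact hs
  have hs4 : Λ.src ξ₁ = Λ.rng (Λ.comp u σ' hs3) := by rw [Λ.rng_comp]; exact hs2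
  have hassoc : Λ.comp ξ₁ (Λ.comp u σ' hs3) hs4 = ρ := by
    rw [← Λ.comp_assoc ξ₁ u σ' hs2 hs5 hs3 hs4, comp_eq_comp' hc2 hs5 hs]
    exact hc
  have hle : Λ.deg ξ ≤ Λ.deg ρ := le_trans hξσ (pext_deg_le ⟨σ', hs, hc.symm⟩)
  have hdeg2 : Λ.deg ρ = Λ.deg ξ + (Λ.deg ρ - Λ.deg ξ) := by
    funext i; have := Pi.le_def.mp hle i; simp only [Pi.add_apply, Pi.sub_apply]; omega
  obtain ⟨q, _, huq⟩ := Λ.factor ρ (Λ.deg ξ) (Λ.deg ρ - Λ.deg ξ) hdeg2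
  have hdc : Λ.deg c = Λ.deg ρ - Λ.deg ξ := by
    have h1 : Λ.deg ρ = Λ.deg ξ + Λ.deg c := by rw [hρc]; exact Λ.deg_comp _ _ _
    funext i; have := congrFun h1 i
    simp only [Pi.add_apply, Pi.sub_apply] at this ⊢; omega
  have hduσ' : Λ.deg (Λ.comp u σ' hs3) = Λ.deg ρ - Λ.deg ξ := by
    have h1 : Λ.deg (Λ.comp u σ' hs3) = Λ.deg u + Λ.deg σ' := Λ.deg_comp _ _ _
    funext i
    have e1 := congrFun h1 i
    have e2 := congrFun hdu i
    have e3 := congrFun hdσ' i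
    have e4 := congrFun hdσ i
    have e5 := Pi.le_def.mp hξσ i
    have e6 := Pi.le_def.mp hm i
    simp only [Pi.add_apply, Pi.sub_apply] at e1 e2 e3 e4 ⊢
    omega
  have q1 : (ξ, c) = q := huq (ξ, c) ⟨hcξ, rfl, hdc, hρc.symm⟩
  have q2 : (ξ₁, Λ.comp u σ' hs3) = q := huq _ ⟨hs4, hdξ₁, hduσ', hassoc⟩
  have hξξ : ξ₁ = ξ := congrArg Prod.fst (q2.trans q1.symm)
  exact ⟨u, hξξ ▸ hs2, by rw [← hc2]; exact comp_eq_comp' hξξ hs2 (hξξ ▸ hs2)⟩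

lemma lmin_nonempty_of_ext {w τ ξ : Λ.Path} (h1 : PExt Λ w τ) (h2 : PExt Λ w ξ) :
    (Λ.lmin τ ξ).Nonempty := by
  have hm : Λ.deg τ ⊔ Λ.deg ξ ≤ Λ.deg w := sup_le (pext_deg_le h1) (pext_deg_le h2)
  obtain ⟨σ, hσw, hdσ, hpref⟩ := exists_prefix w _ hm
  obtain ⟨a, ha, hσa⟩ := hpref τ h1 le_sup_left
  obtain ⟨b, hb, hσb⟩ := hpref ξ h2 le_sup_right
  refine ⟨(a, b), ha, hb, by rw [← hσa, ← hσb], ?_⟩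
  rw [← Λ.deg_comp τ a ha, ← hσa, hdσ]

lemma φ_one (SS : SelfSimilar k G Λ) (μ : Λ.Path) : SS.φ 1 μ = 1 := by
  have h1 := SS.φ_mul 1 1 μ
  rw [one_mul, SS.act_one] at h1
  have h2 : SS.φ 1 μ * 1 = SS.φ 1 μ * SS.φ 1 μ := by rw [mul_one]; exact h1
  exact (mul_left_cancel h2).symm

lemma act_inv_act (SS : SelfSimilar k G Λ) (g : G) (μ : Λ.Path) :
    SS.act g⁻¹ (SS.act g μ) = μ := by
  rw [← SS.act_mul]
  have : g⁻¹ * g = 1 := by group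
  rw [this, SS.act_one]

/-- Diagonal collections of triples. -/
def IsDiag (E : Set (Λ.Path × G × Λ.Path)) : Prop :=
  ∀ t ∈ E, t = (t.1, (1 : G), t.1)

lemma mem_diag {E : Set (Λ.Path × G × Λ.Path)} (hE : IsDiag E) {μ : Λ.Path} {g : G}
    {ν : Λ.Path} (h : (μ, g, ν) ∈ E) : g = 1 ∧ ν = μ := by
  have h2 := hE _ h
  exact ⟨congrArg (fun u => u.2.1) h2, congrArg (fun u => u.2.2) h2⟩

lemma mem_smul_diag (SS : SelfSimilar k G Λ) {A B : Set (Λ.Path × G × Λ.Path)}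
    (hA : IsDiag A) (hB : IsDiag B) {t : Λ.Path × G × Λ.Path} :
    t ∈ smul SS A B ↔ ∃ ρ τ ξ, (τ, (1:G), τ) ∈ A ∧ (ξ, (1:G), ξ) ∈ B ∧
      PExt Λ ρ τ ∧ PExt Λ ρ ξ ∧ Λ.deg ρ = Λ.deg τ ⊔ Λ.deg ξ ∧ t = (ρ, (1:G), ρ) := by
  constructor
  · rintro ⟨μ, g, ν, ξ, h, η, α, β, hμ, hξ, ⟨hl1, hl2, hleq, hldeg⟩, h1, h2, rfl⟩
    obtain ⟨rfl, rfl⟩ := mem_diag hA hμ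
    obtain ⟨rfl, rfl⟩ := mem_diag hB hξ
    have hα : SS.act (1:G) α = α := SS.act_one α
    have hβ : SS.act (1:G)⁻¹ β = β := by rw [inv_one, SS.act_one]
    refine ⟨Λ.comp ν α hl1, ν, η, hμ, hξ, ⟨α, hl1, rfl⟩, ⟨β, hl2, hleq⟩,
      by rw [Λ.deg_comp]; exact hldeg, ?_⟩
    simp only [Prod.mk.injEq]
    refine ⟨comp_eq_comp hα h1 hl1, ?_, (comp_eq_comp hβ h2 hl2).trans hleq.symm⟩
    rw [inv_one, φ_one, φ_one, mul_one]
  · rintro ⟨ρ, τ, ξ, hτ, hξ, ⟨a, ha, rfl⟩, ⟨b, hb, hρb⟩, hdeg, rfl⟩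
    rw [Λ.deg_comp] at hdeg
    have h1 : Λ.src τ = Λ.rng (SS.act 1 a) := by rw [SS.act_one]; exact ha
    have h2 : Λ.src ξ = Λ.rng (SS.act (1:G)⁻¹ b) := by rw [inv_one, SS.act_one]; exact hb
    refine ⟨τ, 1, τ, ξ, 1, ξ, a, b, hτ, hξ, ⟨ha, hb, hρb, hdeg⟩, h1, h2, ?_⟩
    simp only [Prod.mk.injEq]
    refine ⟨comp_eq_comp (SS.act_one a).symm ha h1, ?_,
      hρb.trans (comp_eq_comp (by rw [inv_one, SS.act_one] : b = SS.act (1:G)⁻¹ b) hb h2)⟩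
    rw [inv_one, φ_one, φ_one, mul_one]

lemma isIdem_diag {SS : SelfSimilar k G Λ} {E : Set (Λ.Path × G × Λ.Path)}
    (hE : IsIdem SS E) : IsDiag E := by
  intro t ht
  obtain ⟨⟨hfin, hsrc, horth⟩, hprod⟩ := hE
  have ht' : t ∈ smul SS E E := by rw [hprod]; exact ht
  obtain ⟨μ, g, ν, ξ, h, η, α, β, hμ, hξ, ⟨hl1, hl2, hleq, hldeg⟩, h1, h2, hteq⟩ := ht'
  have ht1 : t.1 = Λ.comp μ (SS.act g α) h1 := by rw [hteq]
  have hext1 : PExt Λ t.1 μ := ⟨SS.act g α, h1, ht1⟩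
  have heq1 : t = (μ, g, ν) := by
    by_contra hne
    have h0 := (horth t ht (μ, g, ν) hμ hne).1
    have hne2 : (Λ.lmin t.1 μ).Nonempty := lmin_nonempty_of_ext (pext_refl t.1) hext1
    rw [h0] at hne2; exact Set.not_nonempty_empty hne2
  have ht3 : t.2.2 = Λ.comp η (SS.act h⁻¹ β) h2 := by rw [hteq]
  have hext2 : PExt Λ t.2.2 η := ⟨_, h2, ht3⟩
  have heq2 : t = (ξ, h, η) := by
    by_contra hne
    have h0 := (horth t ht (ξ, h, η) hξ hne).2
    have hne2 : (Λ.lmin t.2.2 η).Nonempty := lmin_nonempty_of_ext (pext_refl _) hext2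
    rw [h0] at hne2; exact Set.not_nonempty_empty hne2
  have h12 := heq1.symm.trans heq2
  obtain rfl : μ = ξ := congrArg Prod.fst h12
  obtain rfl : g = h := congrArg (fun u => u.2.1) h12
  obtain rfl : ν = η := congrArg (fun u => u.2.2) h12
  have hμ1 : μ = Λ.comp μ (SS.act g α) h1 := (congrArg Prod.fst heq1).symm.trans ht1
  have hν1 : ν = Λ.comp ν (SS.act g⁻¹ β) h2 := (congrArg (fun u => u.2.2) heq1).symm.trans ht3
  have hdα : Λ.deg α = 0 := by
    have e : Λ.deg μ = Λ.deg μ + Λ.deg α := by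
      conv_lhs => rw [hμ1]
      rw [Λ.deg_comp, SS.deg_act]
    funext i; have := congrFun e i
    simp only [Pi.add_apply, Pi.zero_apply] at this ⊢; omega
  have hdβ : Λ.deg β = 0 := by
    have e : Λ.deg ν = Λ.deg ν + Λ.deg β := by
      conv_lhs => rw [hν1]
      rw [Λ.deg_comp, SS.deg_act]
    funext i; have := congrFun e i
    simp only [Pi.add_apply, Pi.zero_apply] at this ⊢; omega
  have hα : α = Λ.src ν := by rw [← Λ.rng_vtx α hdα, ← hl1]
  have hβ : β = Λ.src μ := by rw [← Λ.rng_vtx β hdβ, ← hl2]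
  have hνμ : ν = μ := by
    have e1 : Λ.comp ν α hl1 = ν := by
      rw [comp_eq_comp hα hl1 (hα ▸ hl1)]; exact Λ.comp_src_id ν _
    have e2 : Λ.comp μ β hl2 = μ := by
      rw [comp_eq_comp hβ hl2 (hβ ▸ hl2)]; exact Λ.comp_src_id μ _
    rw [← e1, ← e2]; exact hleq
  have hg1 : g = 1 := by
    have e : t.2.1 = SS.φ g α * SS.φ g (SS.act g⁻¹ β) := by rw [hteq]
    have e2 : t.2.1 = g := congrArg (fun u => u.2.1) heq1
    have e3 : SS.φ g α = g := SS.φ_vtx g α hdα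
    have e4 : SS.φ g (SS.act g⁻¹ β) = g := SS.φ_vtx g _ (by rw [SS.deg_act]; exact hdβ)
    have e5 : g = g * g := by have h' := e2.symm.trans e; rwa [e3, e4] at h'
    have e6 : g * 1 = g * g := by rw [mul_one]; exact e5
    exact (mul_left_cancel e6).symm
  rw [heq1]
  simp only [Prod.mk.injEq]
  exact ⟨trivial, hg1, hνμ⟩

/-- Diagonal orthogonal collections. -/
def DOrth (SS : SelfSimilar k G Λ) (E : Set (Λ.Path × G × Λ.Path)) : Prop :=
  IsElem SS E ∧ IsDiag E

lemma dorth_lmin {SS : SelfSimilar k G Λ} {E : Set (Λ.Path × G × Λ.Path)}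
    (hE : DOrth SS E) {τ ξ : Λ.Path} (hτ : (τ, (1:G), τ) ∈ E) (hξ : (ξ, (1:G), ξ) ∈ E)
    (hne : τ ≠ ξ) : Λ.lmin τ ξ = ∅ :=
  (hE.1.2.2 (τ, 1, τ) hτ (ξ, 1, ξ) hξ (fun hc => hne (congrArg Prod.fst hc))).1

lemma smul_self {SS : SelfSimilar k G Λ} {C : Set (Λ.Path × G × Λ.Path)}
    (hC : DOrth SS C) : smul SS C C = C := by
  ext t
  rw [mem_smul_diag SS hC.2 hC.2]
  constructor
  · rintro ⟨ρ, τ, ξ, hτ, hξ, he1, he2, hdeg, rfl⟩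
    by_cases hne : τ = ξ
    · subst hne
      rw [sup_idem] at hdeg
      rw [pext_self_eq he1 hdeg]
      exact hτ
    · have h0 := dorth_lmin hC hτ hξ hne
      have h1 := lmin_nonempty_of_ext he1 he2
      rw [h0] at h1
      exact absurd h1 Set.not_nonempty_empty
  · intro ht
    have hd := hC.2 _ ht
    exact ⟨t.1, t.1, t.1, hd ▸ ht, hd ▸ ht, pext_refl _, pext_refl _, (sup_idem _).symm, hd⟩

lemma isDiag_smul {SS : SelfSimilar k G Λ} {A B : Set (Λ.Path × G × Λ.Path)}
    (hA : IsDiag A) (hB : IsDiag B) : IsDiag (smul SS A B) := by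
  intro t ht
  obtain ⟨ρ, τ, ξ, _, _, _, _, _, rfl⟩ := (mem_smul_diag SS hA hB).mp ht
  rfl

open Classical in
noncomputable def cmpApp (Λ : KGraph k) (τ : Λ.Path) (p : Λ.Path × Λ.Path) : Λ.Path :=
  if h : Λ.src τ = Λ.rng p.1 then Λ.comp τ p.1 h else τ

lemma smul_finite {SS : SelfSimilar k G Λ} {A B : Set (Λ.Path × G × Λ.Path)}
    (hfa : Λ.FinitelyAligned) (hA : DOrth SS A) (hB : DOrth SS B) :
    (smul SS A B).Finite := by
  have hsub : smul SS A B ⊆ ⋃ t1 ∈ A, ⋃ t2 ∈ B,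
      (fun p => (cmpApp Λ t1.1 p, (1:G), cmpApp Λ t1.1 p)) '' (Λ.lmin t1.1 t2.1) := by
    intro t ht
    obtain ⟨ρ, τ, ξ, hτ, hξ, ⟨a, ha, rfl⟩, ⟨b, hb, hρb⟩, hdeg, rfl⟩ :=
      (mem_smul_diag SS hA.2 hB.2).mp ht
    refine Set.mem_biUnion hτ (Set.mem_biUnion hξ ?_)
    refine ⟨(a, b), ⟨ha, hb, hρb, by rw [← Λ.deg_comp τ a ha]; exact hdeg⟩, ?_⟩
    show (cmpApp Λ τ (a, b), (1:G), cmpApp Λ τ (a, b)) = _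
    rw [cmpApp, dif_pos ha]
  refine Set.Finite.subset ?_ hsub
  exact hA.1.1.biUnion (fun t1 _ => hB.1.1.biUnion (fun t2 _ => ((hfa t1.1 t2.1).image _)))

lemma dorth_smul {SS : SelfSimilar k G Λ} {A B : Set (Λ.Path × G × Λ.Path)}
    (hfa : Λ.FinitelyAligned) (hA : DOrth SS A) (hB : DOrth SS B) :
    DOrth SS (smul SS A B) := by
  have hdiag : IsDiag (smul SS A B) := isDiag_smul hA.2 hB.2
  refine ⟨⟨smul_finite hfa hA hB, ?_, ?_⟩, hdiag⟩
  · intro t ht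
    obtain ⟨ρ, τ, ξ, _, _, _, _, _, rfl⟩ := (mem_smul_diag SS hA.2 hB.2).mp ht
    show Λ.src ρ = SS.act 1 (Λ.src ρ)
    rw [SS.act_one]
  · intro t ht u hu hne
    obtain ⟨ρ, τ, ξ, hτ, hξ, he1, he2, hdeg, rfl⟩ := (mem_smul_diag SS hA.2 hB.2).mp ht
    obtain ⟨ρ', τ', ξ', hτ', hξ', he1', he2', hdeg', rfl⟩ := (mem_smul_diag SS hA.2 hB.2).mp hu
    have hρρ : ρ ≠ ρ' := fun hc => hne (by rw [hc])
    have key : Λ.lmin ρ ρ' = ∅ := by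
      rw [Set.eq_empty_iff_forall_notMem]
      rintro ⟨a, b⟩ ⟨hw1, hw2, hweq, hwdeg⟩
      have hwρ : PExt Λ (Λ.comp ρ a hw1) ρ := ⟨a, hw1, rfl⟩
      have hwρ' : PExt Λ (Λ.comp ρ a hw1) ρ' := ⟨b, hw2, hweq⟩
      by_cases hττ : τ = τ'
      · by_cases hξξ : ξ = ξ'
        · subst hττ; subst hξξ
          have hdd : Λ.deg ρ = Λ.deg ρ' := by rw [hdeg, hdeg']
          obtain ⟨σ, hσ, hdσ, hpref⟩ :=
            exists_prefix (Λ.comp ρ a hw1) (Λ.deg ρ) (pext_deg_le hwρ)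
          have e1 : σ = ρ := pext_self_eq (hpref ρ hwρ le_rfl) hdσ
          have e2 : σ = ρ' := pext_self_eq (hpref ρ' hwρ' hdd.ge) (hdσ.trans hdd)
          exact hρρ (e1.symm.trans e2)
        · have h1 := pext_trans hwρ he2
          have h2 := pext_trans hwρ' he2'
          have h3 := lmin_nonempty_of_ext h1 h2
          rw [dorth_lmin hB hξ hξ' hξξ] at h3
          exact Set.not_nonempty_empty h3
      · have h1 := pext_trans hwρ he1
        have h2 := pext_trans hwρ' he1'
        have h3 := lmin_nonempty_of_ext h1 h2
        rw [dorth_lmin hA hτ hτ' hττ] at h3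
        exact Set.not_nonempty_empty h3
    exact ⟨key, key⟩

lemma isIdem_of_dorth {SS : SelfSimilar k G Λ} {C : Set (Λ.Path × G × Λ.Path)}
    (hC : DOrth SS C) : IsIdem SS C := ⟨hC.1, smul_self hC⟩

lemma dorth_of_isIdem {SS : SelfSimilar k G Λ} {E : Set (Λ.Path × G × Λ.Path)}
    (hE : IsIdem SS E) : DOrth SS E := ⟨hE.1, isIdem_diag hE⟩

lemma smul_comm_diag {SS : SelfSimilar k G Λ} {A B : Set (Λ.Path × G × Λ.Path)}
    (hA : IsDiag A) (hB : IsDiag B) : smul SS A B = smul SS B A := by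
  ext t
  rw [mem_smul_diag SS hA hB, mem_smul_diag SS hB hA]
  constructor <;> rintro ⟨ρ, τ, ξ, h1, h2, h3, h4, h5, rfl⟩ <;>
    exact ⟨ρ, ξ, τ, h2, h1, h4, h3, by rw [h5, sup_comm], rfl⟩

lemma smul_assoc_sub {SS : SelfSimilar k G Λ} {A B C : Set (Λ.Path × G × Λ.Path)}
    (hA : IsDiag A) (hB : IsDiag B) (hC : IsDiag C) :
    smul SS (smul SS A B) C ⊆ smul SS A (smul SS B C) := by
  intro t ht
  rw [mem_smul_diag SS (isDiag_smul hA hB) hC] at ht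
  obtain ⟨ρ, σ, ζ, hσ, hζ, heσ, heζ, hdeg, rfl⟩ := ht
  obtain ⟨σ₀, τ, ξ, hτ, hξ, heτ, heξ, hdσ, hσeq⟩ := (mem_smul_diag SS hA hB).mp hσ
  have hσσ : σ = σ₀ := congrArg Prod.fst hσeq
  subst hσσ
  have hm : Λ.deg ξ ⊔ Λ.deg ζ ≤ Λ.deg ρ :=
    sup_le (le_trans (pext_deg_le heξ) (pext_deg_le heσ)) (pext_deg_le heζ)
  obtain ⟨σ', hσ'ρ, hdσ', hpref⟩ := exists_prefix ρ (Λ.deg ξ ⊔ Λ.deg ζ) hm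
  have hξ' : PExt Λ σ' ξ := hpref ξ (pext_trans heσ heξ) le_sup_left
  have hζ' : PExt Λ σ' ζ := hpref ζ heζ le_sup_right
  have hmem : (σ', (1:G), σ') ∈ smul SS B C :=
    (mem_smul_diag SS hB hC).mpr ⟨σ', ξ, ζ, hξ, hζ, hξ', hζ', hdσ', rfl⟩
  rw [mem_smul_diag SS hA (isDiag_smul hB hC)]
  exact ⟨ρ, τ, σ', hτ, hmem, pext_trans heσ heτ, hσ'ρ,
    by rw [hdeg, hdσ, hdσ', sup_assoc], rfl⟩

lemma smul_assoc_diag {SS : SelfSimilar k G Λ} {A B C : Set (Λ.Path × G × Λ.Path)}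
    (hA : IsDiag A) (hB : IsDiag B) (hC : IsDiag C) :
    smul SS (smul SS A B) C = smul SS A (smul SS B C) := by
  refine Set.Subset.antisymm (smul_assoc_sub hA hB hC) ?_
  intro t ht
  rw [smul_comm_diag hA (isDiag_smul hB hC), smul_comm_diag hB hC] at ht
  have ht2 := smul_assoc_sub hC hB hA ht
  rw [smul_comm_diag hC (isDiag_smul hB hA), smul_comm_diag hB hA] at ht2
  exact ht2

lemma smul_sq {SS : SelfSimilar k G Λ} {A B C D : Set (Λ.Path × G × Λ.Path)}
    (hA : IsDiag A) (hB : IsDiag B) (hC : IsDiag C) (hD : IsDiag D) :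
    smul SS (smul SS A B) (smul SS C D) = smul SS (smul SS A C) (smul SS B D) := by
  rw [smul_assoc_diag hA hB (isDiag_smul hC hD),
      ← smul_assoc_diag hB hC hD, smul_comm_diag hB hC,
      smul_assoc_diag hC hB hD,
      ← smul_assoc_diag hA hC (isDiag_smul hB hD)]

lemma smul_empty_left (SS : SelfSimilar k G Λ) (X : Set (Λ.Path × G × Λ.Path)) :
    smul SS ∅ X = ∅ := by
  rw [Set.eq_empty_iff_forall_notMem]
  rintro t ⟨μ, g, ν, ξ, h, η, α, β, hμ, _⟩
  exact hμ

lemma iota_dorth (SS : SelfSimilar k G Λ) (lam : Λ.Path) : DOrth SS (iota Λ G lam) := by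
  refine ⟨⟨Set.finite_singleton _, ?_, ?_⟩, ?_⟩
  · intro u hu
    rw [iota, Set.mem_singleton_iff] at hu
    subst hu
    show Λ.src lam = SS.act 1 (Λ.src lam)
    rw [SS.act_one]
  · intro u hu v hv huv
    rw [iota, Set.mem_singleton_iff] at hu hv
    exact absurd (hu.trans hv.symm) huv
  · intro u hu
    rw [iota, Set.mem_singleton_iff] at hu
    rw [hu]

end Aux

/-- for an ultrafilter `𝓕` in `E(S_{G,Λ})` and `F₀ ∈ 𝓕` there is
a unique `(λ,e_G,λ) ∈ F₀` such that `ι_λ` intersects every `E ∈ 𝓕`; moreover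
`ι_λ ∈ 𝓕`. -/
theorem stmt12 (SS : SelfSimilar k G Λ) (hfa : Λ.FinitelyAligned)
    (𝓕 : Set (Set (Λ.Path × G × Λ.Path))) (h𝓕 : IsUltrafilterE SS 𝓕)
    (F₀ : Set (Λ.Path × G × Λ.Path)) (hF₀ : F₀ ∈ 𝓕) :
    ∃! lam : Λ.Path, (lam, (1 : G), lam) ∈ F₀ ∧
      (∀ E ∈ 𝓕, smul SS (iota Λ G lam) E ≠ ∅) ∧ iota Λ G lam ∈ 𝓕 := by
  obtain ⟨⟨hne𝓕, hidem, hnotempty, hclosed, hup⟩, hmax⟩ := h𝓕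
  have hD : ∀ E ∈ 𝓕, DOrth SS E := fun E hE => dorth_of_isIdem (hidem E hE)
  have hF₀D := hD F₀ hF₀
  -- Step 1: existence of a triple whose first leg meets every member of 𝓕
  have hex : ∃ t ∈ F₀, ∀ E ∈ 𝓕, smul SS (iota Λ G t.1) E ≠ ∅ := by
    by_contra hcon
    push_neg at hcon
    have hcon2 : ∀ t : Λ.Path × G × Λ.Path, ∃ E, E ∈ 𝓕 ∧
        (t ∈ F₀ → smul SS (iota Λ G t.1) E = ∅) := by
      intro t
      by_cases ht : t ∈ F₀
      · obtain ⟨E, hE1, hE2⟩ := hcon t ht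
        exact ⟨E, hE1, fun _ => hE2⟩
      · exact ⟨F₀, hF₀, fun h => absurd h ht⟩
    choose f hf1 hf2 using hcon2
    set l := hF₀D.1.1.toFinset.toList with hl
    set P : List (Λ.Path × G × Λ.Path) → Set (Λ.Path × G × Λ.Path) :=
      fun L => L.foldr (fun t acc => smul SS (f t) acc) F₀ with hP
    have hfold : ∀ L : List (Λ.Path × G × Λ.Path), (P L) ∈ 𝓕 ∧
        ∀ t ∈ L, ∀ s ∈ P L, ∃ u, (u, (1:G), u) ∈ f t ∧ PExt Λ s.1 u := by
      intro L
      induction L with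
      | nil => exact ⟨hF₀, by simp⟩
      | cons t0 L ih =>
        have hmem : P (t0 :: L) = smul SS (f t0) (P L) := rfl
        constructor
        · rw [hmem]; exact hclosed _ (hf1 t0) _ ih.1
        · intro t htL s hs
          rw [hmem] at hs
          obtain ⟨ρ, τ, ξ, hτ, hξ, heτ, heξ, _, rfl⟩ :=
            (mem_smul_diag SS (hD _ (hf1 t0)).2 (hD _ ih.1).2).mp hs
          rcases List.mem_cons.mp htL with h | h
          · subst h; exact ⟨τ, hτ, heτ⟩
          · obtain ⟨u, hu1, hu2⟩ := ih.2 t h (ξ, 1, ξ) hξ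
            exact ⟨u, hu1, pext_trans heξ hu2⟩
    have hQ : smul SS F₀ (P l) ∈ 𝓕 := hclosed _ hF₀ _ (hfold l).1
    have hQempty : smul SS F₀ (P l) = ∅ := by
      rw [Set.eq_empty_iff_forall_notMem]
      intro s hs
      obtain ⟨ρ, τ, ξ, hτ, hξ, heτ, heξ, _, rfl⟩ :=
        (mem_smul_diag SS hF₀D.2 (hD _ (hfold l).1).2).mp hs
      have hτl : (τ, (1:G), τ) ∈ l := by
        rw [hl, Finset.mem_toList, Set.Finite.mem_toFinset]; exact hτ
      obtain ⟨u, hu1, hu2⟩ := (hfold l).2 _ hτl (ξ, 1, ξ) hξ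
      have hlm : (Λ.lmin τ u).Nonempty :=
        lmin_nonempty_of_ext heτ (pext_trans heξ hu2)
      obtain ⟨⟨a, b⟩, hw1, hw2, hweq, hwdeg⟩ := hlm
      have hmem2 : (Λ.comp τ a hw1, (1:G), Λ.comp τ a hw1) ∈
          smul SS (iota Λ G τ) (f (τ, 1, τ)) := by
        refine (mem_smul_diag SS (iota_dorth SS τ).2 (hD _ (hf1 _)).2).mpr ?_
        exact ⟨Λ.comp τ a hw1, τ, u, rfl, hu1, ⟨a, hw1, rfl⟩, ⟨b, hw2, hweq⟩,
          by rw [Λ.deg_comp]; exact hwdeg, rfl⟩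
      rw [hf2 (τ, 1, τ) hτ] at hmem2
      exact hmem2
    exact hnotempty (hQempty ▸ hQ)
  obtain ⟨t, htF₀, htmeets⟩ := hex
  have ht1 : (t.1, (1:G), t.1) ∈ F₀ := (hF₀D.2 t htF₀) ▸ htF₀
  set I := iota Λ G t.1 with hIdef
  have hIdorth := iota_dorth SS t.1
  -- Step 2: ι_λ ∈ 𝓕 via maximality
  have hG : IsFilterE SS {F | IsIdem SS F ∧ ∃ E ∈ 𝓕,
      smul SS F (smul SS I E) = smul SS I E} := by
    refine ⟨⟨smul SS I F₀, isIdem_of_dorth (dorth_smul hfa hIdorth hF₀D), F₀, hF₀,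
        smul_self (dorth_smul hfa hIdorth hF₀D)⟩, fun F hF => hF.1, ?_, ?_, ?_⟩
    · rintro ⟨_, E, hE, habs⟩
      rw [smul_empty_left] at habs
      exact htmeets E hE habs.symm
    · rintro F ⟨hFid, E, hE, hFE⟩ F' ⟨hF'id, E', hE', hF'E⟩
      have dF := dorth_of_isIdem hFid
      have dF' := dorth_of_isIdem hF'id
      have dIE := dorth_smul hfa hIdorth (hD E hE)
      have dIE' := dorth_smul hfa hIdorth (hD E' hE')
      refine ⟨isIdem_of_dorth (dorth_smul hfa dF dF'), smul SS E E',
        hclosed _ hE _ hE', ?_⟩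
      have e0 : smul SS (smul SS I E) (smul SS I E') = smul SS I (smul SS E E') := by
        rw [smul_sq hIdorth.2 (hD E hE).2 hIdorth.2 (hD E' hE').2, smul_self hIdorth]
      rw [← e0, smul_sq dF.2 dF'.2 dIE.2 dIE'.2, hFE, hF'E, e0]
    · rintro F ⟨hFid, E, hE, hFE⟩ H hHid hHF
      have dIE := dorth_smul hfa hIdorth (hD E hE)
      refine ⟨hHid, E, hE, ?_⟩
      rw [← hFE, ← smul_assoc_diag (dorth_of_isIdem hHid).2 (dorth_of_isIdem hFid).2
        dIE.2, hHF]
  have hsub : 𝓕 ⊆ {F | IsIdem SS F ∧ ∃ E ∈ 𝓕,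
      smul SS F (smul SS I E) = smul SS I E} := by
    intro E₀ hE₀
    refine ⟨hidem E₀ hE₀, E₀, hE₀, ?_⟩
    rw [← smul_assoc_diag (hD E₀ hE₀).2 hIdorth.2 (hD E₀ hE₀).2,
      smul_comm_diag (hD E₀ hE₀).2 hIdorth.2,
      smul_assoc_diag hIdorth.2 (hD E₀ hE₀).2 (hD E₀ hE₀).2, smul_self (hD E₀ hE₀)]
  have hGeq := hmax _ hG hsub
  have hI𝓕 : I ∈ 𝓕 := by
    rw [← hGeq]
    refine ⟨isIdem_of_dorth hIdorth, F₀, hF₀, ?_⟩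
    rw [← smul_assoc_diag hIdorth.2 hIdorth.2 hF₀D.2, smul_self hIdorth]
  -- Conclusion with uniqueness
  refine ⟨t.1, ⟨ht1, htmeets, hI𝓕⟩, ?_⟩
  rintro y ⟨hy1, _, hy3⟩
  by_contra hne
  have hprod : smul SS (iota Λ G y) I ∈ 𝓕 := hclosed _ hy3 _ hI𝓕
  have hne2 : smul SS (iota Λ G y) I ≠ ∅ := fun hc => hnotempty (hc ▸ hprod)
  obtain ⟨s, hs⟩ := Set.nonempty_iff_ne_empty.mpr hne2
  obtain ⟨ρ, τ, ξ, hτ, hξ, heτ, heξ, _, rfl⟩ :=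
    (mem_smul_diag SS (iota_dorth SS y).2 hIdorth.2).mp hs
  have hτy : τ = y := congrArg Prod.fst (Set.mem_singleton_iff.mp hτ)
  have hξt : ξ = t.1 := congrArg Prod.fst (Set.mem_singleton_iff.mp hξ)
  have hlm : (Λ.lmin y t.1).Nonempty :=
    lmin_nonempty_of_ext (hτy ▸ heτ) (hξt ▸ heξ)
  rw [dorth_lmin hF₀D hy1 ht1 hne] at hlm
  exact Set.not_nonempty_empty hlm
end

section
/- Let (G,Λ) be a self-similar k-graph that is G-cofinal, i.e., for every vertex v and every boundary path x ∈ ∂Λ there exist n ≤ d(x) and g ∈ G such that vΛ(g·x(n)) ≠ ∅. Then for all idempotents E = ι_λ and F = ι_γ in E(S_{G,Λ}) there exist finitely many elements F_1, …, F_l ∈ S_{G,Λ} such that {F_i E F_i*}_{i=1..l} is an outer cover for F: every nonzero idempotent E' ≤ F satisfies E'(F_i E F_i*) ≠ 0 for some i. -/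
variable {k : ℕ} {G : Type} [Group G] {Λ : KGraph k}

/-!
Let `R` be the set of paths `μ` with `s(λ)Λ(g⬝s(μ)) ≠ ∅` for some `g ∈ G`, and call `b` finitely
covered if finitely many `μ ∈ R` have a common extension with every extension of `b`. If `γ` were
not finitely covered then, `Λ` being finitely aligned, every finite exhaustive set at an initial
segment `w` of an uncovered path `b` contains some `τ` such that `b` and `wτ` have an uncovered
common extension. Serving all these requests in turn builds a boundary path `x ∈ Z(γ)` with no
covered initial segment, whereas `G`-cofinality puts some `x(0,n)` in `R`. So a finite `M ⊆ R`
covers `γ`. For `μ ∈ M`, joined to `s(λ)` by `p` and `g`, the singleton `F_μ = {(μ, g⁻¹, λp)}`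
satisfies `(μ, 1, μ) ∈ F_μ ι_λ F_μ*`; a nonzero idempotent below `ι_γ` contains some `(a, 1, a)`
with `a` extending `γ`, and `a` meets some `μ ∈ M`.
-/

namespace KGraph

def IsPrefix (Λ : KGraph k) (u a : Λ.Path) : Prop :=
  ∃ (δ : Λ.Path) (h : Λ.src u = Λ.rng δ), a = Λ.comp u δ h

lemma rng_src (μ : Λ.Path) : Λ.rng (Λ.src μ) = Λ.src μ := Λ.rng_vtx _ (Λ.deg_src μ)

lemma comp_of_deg_eq_zero {a w : Λ.Path} (hw : Λ.deg w = 0) (h : Λ.src a = Λ.rng w) :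
    Λ.comp a w h = a := by
  obtain rfl : w = Λ.src a := by rw [h, Λ.rng_vtx w hw]
  exact Λ.comp_src_id a h

lemma deg_eq_zero_of_comp_eq_self {a w : Λ.Path} {h : Λ.src a = Λ.rng w}
    (he : Λ.comp a w h = a) : Λ.deg w = 0 := by
  have hd := Λ.deg_comp a w h
  rw [he] at hd
  exact left_eq_add.mp hd

lemma isPrefix_refl (a : Λ.Path) : Λ.IsPrefix a a :=
  ⟨Λ.src a, (rng_src a).symm, (Λ.comp_src_id a _).symm⟩

lemma isPrefix_comp (u δ : Λ.Path) (h : Λ.src u = Λ.rng δ) : Λ.IsPrefix u (Λ.comp u δ h) :=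
  ⟨δ, h, rfl⟩

lemma IsPrefix.comp_left {w u u' : Λ.Path} (hu : Λ.IsPrefix u u') (h : Λ.src w = Λ.rng u)
    (h' : Λ.src w = Λ.rng u') : Λ.IsPrefix (Λ.comp w u h) (Λ.comp w u' h') := by
  obtain ⟨δ, hδ, rfl⟩ := hu
  have hδ' : Λ.src (Λ.comp w u h) = Λ.rng δ := by rw [Λ.src_comp]; exact hδ
  exact ⟨δ, hδ', (Λ.comp_assoc w u δ h hδ' hδ h').symm⟩

lemma IsPrefix.trans {u a b : Λ.Path} (hua : Λ.IsPrefix u a) (hab : Λ.IsPrefix a b) :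
    Λ.IsPrefix u b := by
  obtain ⟨δ, hδ, rfl⟩ := hua
  obtain ⟨ε, hε, rfl⟩ := hab
  have h : Λ.src u = Λ.rng (Λ.comp δ ε (by rw [← Λ.src_comp u δ hδ]; exact hε)) := by
    rw [Λ.rng_comp]; exact hδ
  rw [Λ.comp_assoc u δ ε hδ hε _ h]
  exact isPrefix_comp u _ h

lemma IsPrefix.deg_le {u a : Λ.Path} (h : Λ.IsPrefix u a) : Λ.deg u ≤ Λ.deg a := by
  obtain ⟨δ, hδ, rfl⟩ := h
  rw [Λ.deg_comp]
  exact le_self_add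

lemma IsPrefix.rng_eq {u a : Λ.Path} (h : Λ.IsPrefix u a) : Λ.rng a = Λ.rng u := by
  obtain ⟨δ, hδ, rfl⟩ := h
  exact Λ.rng_comp ..

lemma IsPrefix.eq_of_deg_eq {u v a : Λ.Path} (hu : Λ.IsPrefix u a) (hv : Λ.IsPrefix v a)
    (hd : Λ.deg u = Λ.deg v) : u = v := by
  obtain ⟨δ, hδ, rfl⟩ := hu
  obtain ⟨ε, hε, he⟩ := hv
  have hdeg : Λ.deg u + Λ.deg δ = Λ.deg u + Λ.deg ε := by
    rw [← Λ.deg_comp u δ hδ, he, Λ.deg_comp, hd]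
  obtain ⟨p, -, hp⟩ := Λ.factor (Λ.comp u δ hδ) (Λ.deg u) (Λ.deg δ) (Λ.deg_comp ..)
  have hu' := hp (u, δ) ⟨hδ, rfl, rfl, rfl⟩
  have hv' := hp (v, ε) ⟨hε, hd.symm, (add_left_cancel hdeg).symm, he.symm⟩
  exact congrArg Prod.fst (hu'.trans hv'.symm)

lemma exists_isPrefix_deg_eq {a : Λ.Path} {n : Fin k → ℕ} (hn : n ≤ Λ.deg a) :
    ∃ u, Λ.IsPrefix u a ∧ Λ.deg u = n := by
  obtain ⟨p, ⟨h, hd, -, hp⟩, -⟩ :=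
    Λ.factor a n (Λ.deg a - n) (funext fun i => (Nat.add_sub_cancel' (hn i)).symm)
  exact ⟨p.1, ⟨p.2, h, hp.symm⟩, hd⟩

lemma IsPrefix.isPrefix_of_deg_le {u v a : Λ.Path} (hu : Λ.IsPrefix u a)
    (hv : Λ.IsPrefix v a) (hd : Λ.deg u ≤ Λ.deg v) : Λ.IsPrefix u v := by
  obtain ⟨w, hwv, hw⟩ := exists_isPrefix_deg_eq hd
  rwa [(hwv.trans hv).eq_of_deg_eq hu hw] at hwv

open Classical in
noncomputable def trunc (Λ : KGraph k) (a : Λ.Path) (n : Fin k → ℕ) : Λ.Path :=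
  if h : n ≤ Λ.deg a then (exists_isPrefix_deg_eq h).choose else a

lemma trunc_isPrefix {a : Λ.Path} {n : Fin k → ℕ} (hn : n ≤ Λ.deg a) :
    Λ.IsPrefix (Λ.trunc a n) a := by
  rw [trunc, dif_pos hn]
  exact (exists_isPrefix_deg_eq hn).choose_spec.1

lemma deg_trunc {a : Λ.Path} {n : Fin k → ℕ} (hn : n ≤ Λ.deg a) : Λ.deg (Λ.trunc a n) = n := by
  rw [trunc, dif_pos hn]
  exact (exists_isPrefix_deg_eq hn).choose_spec.2

lemma trunc_eq_of_isPrefix {u a : Λ.Path} {n : Fin k → ℕ} (hu : Λ.IsPrefix u a)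
    (hd : Λ.deg u = n) : Λ.trunc a n = u := by
  subst hd
  exact (trunc_isPrefix hu.deg_le).eq_of_deg_eq hu (deg_trunc hu.deg_le)

lemma trunc_zero (a : Λ.Path) : Λ.trunc a 0 = Λ.rng a :=
  trunc_eq_of_isPrefix ⟨a, Λ.src_vtx _ (Λ.deg_rng a), (Λ.rng_id_comp a _).symm⟩ (Λ.deg_rng a)

lemma trunc_eq_trunc_of_isPrefix {a b : Λ.Path} {n : Fin k → ℕ} (hab : Λ.IsPrefix a b)
    (hn : n ≤ Λ.deg a) : Λ.trunc b n = Λ.trunc a n :=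
  trunc_eq_of_isPrefix ((trunc_isPrefix hn).trans hab) (deg_trunc hn)

lemma trunc_isPrefix_trunc {a : Λ.Path} {m n : Fin k → ℕ} (hmn : m ≤ n) (hn : n ≤ Λ.deg a) :
    Λ.IsPrefix (Λ.trunc a m) (Λ.trunc a n) :=
  (trunc_isPrefix (hmn.trans hn)).isPrefix_of_deg_le (trunc_isPrefix hn)
    (by rw [deg_trunc hn, deg_trunc (hmn.trans hn)]; exact hmn)

lemma exists_mem_lmin_of_isPrefix {q τ e : Λ.Path} (hq : Λ.IsPrefix q e)
    (hτ : Λ.IsPrefix τ e) :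
    ∃ p ∈ Λ.lmin q τ, ∃ h : Λ.src q = Λ.rng p.1, Λ.IsPrefix (Λ.comp q p.1 h) e := by
  obtain ⟨u, hue, hdu⟩ := exists_isPrefix_deg_eq (sup_le hq.deg_le hτ.deg_le)
  obtain ⟨α, hα, rfl⟩ := hq.isPrefix_of_deg_le hue (hdu ▸ le_sup_left)
  obtain ⟨β, hβ, hαβ⟩ := hτ.isPrefix_of_deg_le hue (hdu ▸ le_sup_right)
  exact ⟨(α, β), ⟨hα, hβ, hαβ, by rw [← Λ.deg_comp q α hα, hdu]⟩, hα, hue⟩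

lemma lmin_nonempty_iff {a b : Λ.Path} :
    (Λ.lmin a b).Nonempty ↔ ∃ e, Λ.IsPrefix a e ∧ Λ.IsPrefix b e := by
  constructor
  · rintro ⟨⟨α, β⟩, hα, hβ, hαβ, -⟩
    exact ⟨Λ.comp a α hα, isPrefix_comp a α hα, hαβ ▸ isPrefix_comp b β hβ⟩
  · rintro ⟨e, ha, hb⟩
    obtain ⟨p, hp, -⟩ := exists_mem_lmin_of_isPrefix ha hb
    exact ⟨p, hp⟩

def Covers (Λ : KGraph k) (M : Set Λ.Path) (b : Λ.Path) : Prop :=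
  ∀ c, Λ.IsPrefix b c → ∃ μ ∈ M, (Λ.lmin c μ).Nonempty

def FinitelyCovered (Λ : KGraph k) (R : Set Λ.Path) (b : Λ.Path) : Prop :=
  ∃ M ⊆ R, M.Finite ∧ Λ.Covers M b

lemma finitelyCovered_of_mem {R : Set Λ.Path} {μ : Λ.Path} (hμ : μ ∈ R) :
    Λ.FinitelyCovered R μ :=
  ⟨{μ}, Set.singleton_subset_iff.mpr hμ, Set.finite_singleton μ,
    fun c hc => ⟨μ, rfl, lmin_nonempty_iff.mpr ⟨c, isPrefix_refl c, hc⟩⟩⟩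

lemma FinitelyCovered.mono {R : Set Λ.Path} {u a : Λ.Path} (hu : Λ.FinitelyCovered R u)
    (hua : Λ.IsPrefix u a) : Λ.FinitelyCovered R a := by
  obtain ⟨M, hMR, hM, hcov⟩ := hu
  exact ⟨M, hMR, hM, fun c hc => hcov c (hua.trans hc)⟩

lemma finitelyCovered_of_finite {R T : Set Λ.Path} {b : Λ.Path} (hT : T.Finite)
    (hcov : ∀ b' ∈ T, Λ.FinitelyCovered R b')
    (hmeet : ∀ c, Λ.IsPrefix b c → ∃ b' ∈ T, ∃ e, Λ.IsPrefix c e ∧ Λ.IsPrefix b' e) :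
    Λ.FinitelyCovered R b := by
  choose! M hMR hM hMcov using hcov
  refine ⟨⋃ b' ∈ T, M b', Set.iUnion₂_subset hMR, hT.biUnion hM, fun c hc => ?_⟩
  obtain ⟨b', hb', e, hce, hb'e⟩ := hmeet c hc
  obtain ⟨μ, hμ, hμe⟩ := hMcov b' hb' e hb'e
  obtain ⟨e', hee', hμe'⟩ := lmin_nonempty_iff.mp hμe
  exact ⟨μ, Set.mem_biUnion hb' hμ, lmin_nonempty_iff.mpr ⟨e', hce.trans hee', hμe'⟩⟩

def UncoveredExtension (Λ : KGraph k) (R : Set Λ.Path) (b w : Λ.Path) (X : Set Λ.Path)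
    (c : Λ.Path) : Prop :=
  ¬ Λ.FinitelyCovered R c ∧ Λ.IsPrefix b c ∧
    ∃ τ ∈ X, ∃ h : Λ.src w = Λ.rng τ, Λ.IsPrefix (Λ.comp w τ h) c

/-- Otherwise the paths `w(qα)`, for `τ ∈ X` and `(α, β) ∈ Λ^min(q, τ)`, would be finitely many
finitely covered paths meeting every extension of `b = wq`. -/
lemma exists_uncoveredExtension (hfa : Λ.FinitelyAligned) {R X : Set Λ.Path} {w b : Λ.Path}
    (hwb : Λ.IsPrefix w b) (hb : ¬ Λ.FinitelyCovered R b) (hX : X.Finite)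
    (hexh : Λ.Exhaustive (Λ.src w) X) : ∃ c, Λ.UncoveredExtension R b w X c := by
  obtain ⟨q, hw, rfl⟩ := hwb
  set T := ⋃ τ ∈ X, ⋃ p ∈ Λ.lmin q τ,
    {c | ∃ (h : Λ.src q = Λ.rng p.1) (h' : Λ.src w = Λ.rng (Λ.comp q p.1 h)),
      c = Λ.comp w (Λ.comp q p.1 h) h'}
  have hT : T.Finite := hX.biUnion fun τ _ => (hfa q τ).biUnion fun p _ =>
    Set.Subsingleton.finite (by rintro _ ⟨_, _, rfl⟩ _ ⟨_, _, rfl⟩; rfl)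
  by_contra hnone
  refine hb (finitelyCovered_of_finite hT (fun c hc => ?_) fun c hc => ?_)
  · simp only [T, Set.mem_iUnion, Set.mem_ofPred_eq] at hc
    obtain ⟨τ, hτ, ⟨α, β⟩, ⟨hα', hβ, hαβ, -⟩, hα, h', rfl⟩ := hc
    by_contra hc
    have hwτ : Λ.src w = Λ.rng τ := by rw [hw, ← Λ.rng_comp q α hα, hαβ, Λ.rng_comp]
    refine hnone ⟨_, hc, (isPrefix_comp q α hα).comp_left hw h', τ, hτ, hwτ, ?_⟩
    simp only [hαβ]
    exact (isPrefix_comp τ β hβ).comp_left hwτ _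
  · obtain ⟨ζ, hζ, rfl⟩ := hc
    have hqζ : Λ.src q = Λ.rng ζ := by rw [← Λ.src_comp w q hw]; exact hζ
    have hwqζ : Λ.src w = Λ.rng (Λ.comp q ζ hqζ) := by rw [Λ.rng_comp]; exact hw
    obtain ⟨τ, hτ, hne⟩ := hexh _ hwqζ.symm
    obtain ⟨e, hζe, hτe⟩ := lmin_nonempty_iff.mp (Set.nonempty_iff_ne_empty.mpr hne)
    obtain ⟨p, hp, hα, hαe⟩ :=
      exists_mem_lmin_of_isPrefix ((isPrefix_comp q ζ hqζ).trans hζe) hτe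
    have hwe : Λ.src w = Λ.rng e := by rw [hζe.rng_eq, Λ.rng_comp]; exact hw
    have hwα : Λ.src w = Λ.rng (Λ.comp q p.1 hα) := by rw [Λ.rng_comp]; exact hw
    refine ⟨_, ?_, Λ.comp w e hwe, ?_, hαe.comp_left hwα hwe⟩
    · simp only [T, Set.mem_iUnion, Set.mem_ofPred_eq]
      exact ⟨τ, hτ, p, hp, hα, hwα, rfl⟩
    · rw [Λ.comp_assoc w q ζ hw hζ hqζ hwqζ]
      exact hζe.comp_left hwqζ hwe

section Chain

variable (A : ℕ → Λ.Path)

noncomputable def chainDeg : Fin k → ℕ∞ := fun i => ⨆ j, (Λ.deg (A j) i : ℕ∞)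

open Classical in
/-- Beyond the chain the value is `x(0, 0)`, as `BoundaryPath.seg_junk` demands. -/
noncomputable def chainSeg (n : Fin k → ℕ) : Λ.Path :=
  if h : ∃ j, n ≤ Λ.deg (A j) then Λ.trunc (A h.choose) n else Λ.trunc (A 0) 0

variable {A}

lemma isPrefix_of_le (hA : ∀ j, Λ.IsPrefix (A j) (A (j + 1))) {i j : ℕ} (hij : i ≤ j) :
    Λ.IsPrefix (A i) (A j) := by
  induction hij with
  | refl => exact isPrefix_refl _
  | step _ ih => exact ih.trans (hA _)

lemma leDeg_chainDeg_iff (hA : ∀ j, Λ.IsPrefix (A j) (A (j + 1))) {n : Fin k → ℕ} :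
    LeDeg (chainDeg A) n ↔ ∃ j, n ≤ Λ.deg (A j) := by
  constructor
  · intro hn
    have hcoord : ∀ i, ∃ j, n i ≤ Λ.deg (A j) i := by
      intro i
      by_contra! hlt
      have hsup : chainDeg A i ≤ ((n i - 1 : ℕ) : ℕ∞) :=
        iSup_le fun j => Nat.cast_le.mpr (Nat.le_pred_of_lt (hlt j))
      have hle := Nat.cast_le.mp ((hn i).trans hsup)
      have hpos := hlt 0
      omega
    choose j hj using hcoord
    exact ⟨Finset.univ.sup j, fun i =>
      (hj i).trans ((isPrefix_of_le hA (Finset.le_sup (Finset.mem_univ i))).deg_le i)⟩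
  · rintro ⟨j, hj⟩ i
    exact (Nat.cast_le.mpr (hj i)).trans (le_iSup (fun j => (Λ.deg (A j) i : ℕ∞)) j)

lemma chainSeg_eq (hA : ∀ j, Λ.IsPrefix (A j) (A (j + 1))) {n : Fin k → ℕ} {j : ℕ}
    (hj : n ≤ Λ.deg (A j)) : chainSeg A n = Λ.trunc (A j) n := by
  have hex : ∃ j, n ≤ Λ.deg (A j) := ⟨j, hj⟩
  rw [chainSeg, dif_pos hex]
  rcases le_total hex.choose j with hle | hle
  · exact (trunc_eq_trunc_of_isPrefix (isPrefix_of_le hA hle) hex.choose_spec).symm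
  · exact trunc_eq_trunc_of_isPrefix (isPrefix_of_le hA hle) hj

noncomputable def _root_.BoundaryPath.ofChain (hA : ∀ j, Λ.IsPrefix (A j) (A (j + 1)))
    (hX : ∀ j n, n ≤ Λ.deg (A j) → ∀ X : Set Λ.Path, X.Finite →
      Λ.Exhaustive (Λ.src (Λ.trunc (A j) n)) X →
      ∃ τ ∈ X, ∃ (j' : ℕ) (h : Λ.src (Λ.trunc (A j) n) = Λ.rng τ),
        Λ.IsPrefix (Λ.comp (Λ.trunc (A j) n) τ h) (A j')) :
    BoundaryPath Λ where
  bdeg := chainDeg A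
  seg := chainSeg A
  deg_seg n hn := by
    obtain ⟨j, hj⟩ := (leDeg_chainDeg_iff hA).mp hn
    rw [chainSeg_eq hA hj, deg_trunc hj]
  rng_seg n hn := by
    obtain ⟨j, hj⟩ := (leDeg_chainDeg_iff hA).mp hn
    rw [chainSeg_eq hA hj, chainSeg_eq hA (zero_le : 0 ≤ Λ.deg (A j)),
      trunc_zero, (trunc_isPrefix hj).rng_eq]
  seg_comp m n hmn := by
    obtain ⟨j, hj⟩ := (leDeg_chainDeg_iff hA).mp hmn
    obtain ⟨τ, h, he⟩ := trunc_isPrefix_trunc (le_self_add : m ≤ m + n) hj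
    refine ⟨τ, ?_, ?_, ?_⟩
    · rwa [chainSeg_eq hA (le_self_add.trans hj)]
    · have hd := Λ.deg_comp _ τ h
      rw [← he, deg_trunc hj, deg_trunc (le_self_add.trans hj)] at hd
      exact (add_left_cancel hd).symm
    · simp only [chainSeg_eq hA hj, chainSeg_eq hA (le_self_add.trans hj)]
      exact he
  seg_junk n hn := by
    rw [chainSeg, dif_neg (mt (leDeg_chainDeg_iff hA).mpr hn),
      chainSeg_eq hA (zero_le : 0 ≤ Λ.deg (A 0))]
  boundary n hn X hXfin _ hexh := by
    obtain ⟨j, hj⟩ := (leDeg_chainDeg_iff hA).mp hn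
    rw [chainSeg_eq hA hj] at hexh ⊢
    obtain ⟨τ, hτ, j', h, hj'⟩ := hX j n hj X hXfin hexh
    have hd : Λ.deg (Λ.comp (Λ.trunc (A j) n) τ h) = n + Λ.deg τ := by
      rw [Λ.deg_comp, deg_trunc hj]
    refine ⟨τ, hτ, (leDeg_chainDeg_iff hA).mpr ⟨j', hd ▸ hj'.deg_le⟩, h, ?_⟩
    rw [chainSeg_eq hA (hd ▸ hj'.deg_le), trunc_eq_of_isPrefix hj' hd]

end Chain

open Classical in
noncomputable def extendStep (R : Set Λ.Path) (b : Λ.Path)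
    (s : (Fin k → ℕ) × Finset Λ.Path) : Λ.Path :=
  if h : ∃ c, Λ.UncoveredExtension R b (Λ.trunc b s.1) s.2 c then h.choose else b

lemma isPrefix_extendStep (R : Set Λ.Path) (b : Λ.Path) (s : (Fin k → ℕ) × Finset Λ.Path) :
    Λ.IsPrefix b (extendStep R b s) := by
  rw [extendStep]
  split_ifs with h
  exacts [h.choose_spec.2.1, isPrefix_refl b]

lemma not_finitelyCovered_extendStep {R : Set Λ.Path} {b : Λ.Path}
    (hb : ¬ Λ.FinitelyCovered R b) (s : (Fin k → ℕ) × Finset Λ.Path) :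
    ¬ Λ.FinitelyCovered R (extendStep R b s) := by
  rw [extendStep]
  split_ifs with h
  exacts [h.choose_spec.1, hb]

lemma uncoveredExtension_extendStep {R : Set Λ.Path} {b : Λ.Path} {n : Fin k → ℕ}
    {X : Finset Λ.Path} (h : ∃ c, Λ.UncoveredExtension R b (Λ.trunc b n) X c) :
    Λ.UncoveredExtension R b (Λ.trunc b n) X (extendStep R b (n, X)) := by
  rw [extendStep, dif_pos h]
  exact h.choose_spec

/-- Step `j + 1` serves the request `f j.unpair.1`, so every request recurs at arbitrarily late
steps. -/
noncomputable def uncoveredChain (R : Set Λ.Path) (f : ℕ → (Fin k → ℕ) × Finset Λ.Path)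
    (a : Λ.Path) : ℕ → Λ.Path
  | 0 => a
  | j + 1 => extendStep R (uncoveredChain R f a j) (f j.unpair.1)

theorem exists_boundaryPath_not_finitelyCovered (hfa : Λ.FinitelyAligned) {R : Set Λ.Path}
    {a : Λ.Path} (ha : ¬ Λ.FinitelyCovered R a) :
    ∃ x : BoundaryPath Λ, ∀ n, LeDeg x.bdeg n → ¬ Λ.FinitelyCovered R (x.seg n) := by
  have : Countable Λ.Path := Λ.countable
  obtain ⟨f, hf⟩ := exists_surjective_nat ((Fin k → ℕ) × Finset Λ.Path)
  set A := uncoveredChain R f a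
  have hA : ∀ j, Λ.IsPrefix (A j) (A (j + 1)) := fun j => isPrefix_extendStep ..
  have hAR : ∀ j, ¬ Λ.FinitelyCovered R (A j) := by
    intro j
    induction j with
    | zero => exact ha
    | succ j ih => exact not_finitelyCovered_extendStep ih _
  have hX : ∀ j₀ n, n ≤ Λ.deg (A j₀) → ∀ X : Set Λ.Path, X.Finite →
      Λ.Exhaustive (Λ.src (Λ.trunc (A j₀) n)) X →
      ∃ τ ∈ X, ∃ (j' : ℕ) (h : Λ.src (Λ.trunc (A j₀) n) = Λ.rng τ),
        Λ.IsPrefix (Λ.comp (Λ.trunc (A j₀) n) τ h) (A j') := by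
    intro j₀ n hn X hXfin hexh
    obtain ⟨c, hc⟩ := hf (n, hXfin.toFinset)
    set j := Nat.pair c j₀
    have hj : Λ.IsPrefix (A j₀) (A j) := isPrefix_of_le hA (Nat.right_le_pair c j₀)
    have htrunc : Λ.trunc (A j) n = Λ.trunc (A j₀) n := trunc_eq_trunc_of_isPrefix hj hn
    have hnext : Λ.UncoveredExtension R (A j) (Λ.trunc (A j) n) X (A (j + 1)) := by
      have hreq : f j.unpair.1 = (n, hXfin.toFinset) := by rw [Nat.unpair_pair, hc]
      have h := uncoveredExtension_extendStep (R := R) (b := A j) (n := n)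
        (X := hXfin.toFinset) (by
          rw [hXfin.coe_toFinset]
          exact exists_uncoveredExtension hfa (trunc_isPrefix (hn.trans hj.deg_le)) (hAR j)
            hXfin (htrunc ▸ hexh))
      rw [← hreq, hXfin.coe_toFinset] at h
      exact h
    obtain ⟨-, -, τ, hτ, h, hτA⟩ := hnext
    rw [← htrunc]
    exact ⟨τ, hτ, j + 1, h, hτA⟩
  refine ⟨BoundaryPath.ofChain hA hX, fun n hn => ?_⟩
  obtain ⟨j, hj⟩ := (leDeg_chainDeg_iff hA).mp hn
  change ¬ Λ.FinitelyCovered R (chainSeg A n)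
  rw [chainSeg_eq hA hj]
  exact fun hcov => hAR j (hcov.mono (trunc_isPrefix hj))

end KGraph

namespace SelfSimilar

variable (SS : SelfSimilar k G Λ)

lemma φ_one (μ : Λ.Path) : SS.φ 1 μ = 1 := by
  have h := SS.φ_mul 1 1 μ
  rw [one_mul, SS.act_one] at h
  exact left_eq_mul.mp h

lemma act_inv_act (g : G) (μ : Λ.Path) : SS.act g⁻¹ (SS.act g μ) = μ := by
  rw [← SS.act_mul, inv_mul_cancel, SS.act_one]

lemma deg_act_src (g : G) (μ : Λ.Path) : Λ.deg (SS.act g (Λ.src μ)) = 0 := by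
  rw [SS.deg_act, Λ.deg_src]

end SelfSimilar

open KGraph

section Semigroup

variable {SS : SelfSimilar k G Λ}

lemma isElem_singleton {t : Λ.Path × G × Λ.Path} (ht : Λ.src t.1 = SS.act t.2.1 (Λ.src t.2.2)) :
    IsElem SS {t} := by
  refine ⟨Set.finite_singleton t, fun u hu => ?_, fun u hu v hv huv => ?_⟩
  · rwa [Set.mem_singleton_iff.mp hu]
  · exact absurd ((Set.mem_singleton_iff.mp hu).trans (Set.mem_singleton_iff.mp hv).symm) huv

lemma IsElem.eq_of_isPrefix_fst {E : Set (Λ.Path × G × Λ.Path)} (hE : IsElem SS E) {t u}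
    (ht : t ∈ E) (hu : u ∈ E) (h : Λ.IsPrefix u.1 t.1) : t = u := by
  by_contra hne
  have hempty := (hE.2.2 t ht u hu hne).1
  exact (lmin_nonempty_iff.mpr ⟨t.1, isPrefix_refl _, h⟩).ne_empty hempty

lemma IsElem.eq_of_isPrefix_snd {E : Set (Λ.Path × G × Λ.Path)} (hE : IsElem SS E) {t u}
    (ht : t ∈ E) (hu : u ∈ E) (h : Λ.IsPrefix u.2.2 t.2.2) : t = u := by
  by_contra hne
  have hempty := (hE.2.2 t ht u hu hne).2
  exact (lmin_nonempty_iff.mpr ⟨t.2.2, isPrefix_refl _, h⟩).ne_empty hempty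

/-- Each element of an idempotent is a product of itself with itself, so orthogonality forces the
overlap to be trivial. -/
lemma IsIdem.eq_diag_of_mem {E : Set (Λ.Path × G × Λ.Path)} (hE : IsIdem SS E)
    {a b : Λ.Path} {g : G} (ht : (a, g, b) ∈ E) : b = a ∧ g = 1 := by
  have ht' := ht
  rw [← hE.2] at ht'
  obtain ⟨μ, g₁, ν, ξ, h, η, α, β, h₁, h₂, hαβ, hμ, hη, heq⟩ := ht'
  simp only [Prod.mk.injEq] at heq
  obtain ⟨ha, hg, hb⟩ := heq
  have e₁ := hE.1.eq_of_isPrefix_fst ht h₁ (ha ▸ isPrefix_comp μ _ hμ)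
  have e₂ := hE.1.eq_of_isPrefix_snd ht h₂ (hb ▸ isPrefix_comp η _ hη)
  simp only [Prod.mk.injEq] at e₁ e₂
  obtain ⟨rfl, rfl, rfl⟩ := e₁
  obtain ⟨rfl, rfl, rfl⟩ := e₂
  obtain ⟨hα, hβ, hαβ, -⟩ := hαβ
  have hdα : Λ.deg α = 0 := SS.deg_act g α ▸ deg_eq_zero_of_comp_eq_self ha.symm
  have hdβ : Λ.deg (SS.act g⁻¹ β) = 0 := deg_eq_zero_of_comp_eq_self hb.symm
  rw [comp_of_deg_eq_zero hdα, comp_of_deg_eq_zero (SS.deg_act g⁻¹ β ▸ hdβ)] at hαβ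
  refine ⟨hαβ, ?_⟩
  rw [SS.φ_vtx g α hdα, SS.φ_vtx g _ hdβ] at hg
  exact left_eq_mul.mp hg

lemma isPrefix_of_mem_of_iota_smul_eq {E : Set (Λ.Path × G × Λ.Path)} {γ : Λ.Path}
    (hE : smul SS (iota Λ G γ) E = E) {t : Λ.Path × G × Λ.Path} (ht : t ∈ E) :
    Λ.IsPrefix γ t.1 := by
  rw [← hE] at ht
  obtain ⟨μ, g, ν, ξ, h, η, α, β, hγ, -, -, hμ, -, rfl⟩ := ht
  obtain ⟨rfl, -, -⟩ := by simpa [iota] using hγ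
  exact isPrefix_comp μ _ hμ

lemma smul_nonempty {E F : Set (Λ.Path × G × Λ.Path)} {μ ν ξ η : Λ.Path} {g h : G}
    (hE : (μ, g, ν) ∈ E) (hF : (ξ, h, η) ∈ F) (hμ : Λ.src μ = SS.act g (Λ.src ν))
    (hξ : Λ.src ξ = SS.act h (Λ.src η)) (hνξ : (Λ.lmin ν ξ).Nonempty) :
    (smul SS E F).Nonempty := by
  obtain ⟨⟨α, β⟩, hαβ⟩ := hνξ
  have hα : Λ.src μ = Λ.rng (SS.act g α) := by rw [SS.rng_act, ← hαβ.1, hμ]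
  have hβ : Λ.src η = Λ.rng (SS.act h⁻¹ β) := by
    rw [SS.rng_act, ← hαβ.2.1, hξ, SS.act_inv_act]
  exact ⟨_, μ, g, ν, ξ, h, η, α, β, hE, hF, hαβ, hα, hβ, rfl⟩

lemma mem_smul_iota {μ ν lam : Λ.Path} {g : G} (hμ : Λ.src μ = SS.act g (Λ.src ν))
    (hν : Λ.IsPrefix lam ν) : (μ, g, ν) ∈ smul SS {(μ, g, ν)} (iota Λ G lam) := by
  obtain ⟨p, hp, rfl⟩ := hν
  set ν := Λ.comp lam p hp
  have hs : Λ.src ν = Λ.rng (Λ.src ν) := (rng_src ν).symm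
  have hlmin : (Λ.src ν, p) ∈ Λ.lmin ν lam := by
    refine ⟨hs, hp, Λ.comp_src_id ν hs, ?_⟩
    rw [Λ.deg_src, add_zero, Λ.deg_comp, sup_eq_left.mpr le_self_add]
  have hμ' : Λ.src μ = Λ.rng (SS.act g (Λ.src ν)) := by rw [SS.rng_act, ← hs, hμ]
  have hp' : Λ.src lam = Λ.rng (SS.act 1⁻¹ p) := by rw [inv_one, SS.act_one]; exact hp
  refine ⟨μ, g, ν, lam, 1, lam, Λ.src ν, p, rfl, rfl, hlmin, hμ', hp', ?_⟩
  rw [comp_of_deg_eq_zero (SS.deg_act_src g ν), SS.φ_vtx g _ (Λ.deg_src ν), SS.φ_one, mul_one]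
  simp only [inv_one, SS.act_one, ν]

lemma mem_smul_sstar {F : Set (Λ.Path × G × Λ.Path)} {μ ν : Λ.Path} {g : G}
    (hF : (μ, g, ν) ∈ F) (hμ : Λ.src μ = SS.act g (Λ.src ν)) :
    (μ, 1, μ) ∈ smul SS F (sstar {(μ, g, ν)}) := by
  have hstar : (ν, g⁻¹, μ) ∈ sstar {(μ, g, ν)} := by simp [sstar]
  have hs : Λ.src ν = Λ.rng (Λ.src ν) := (rng_src ν).symm
  have hμ' : Λ.src μ = Λ.rng (SS.act g (Λ.src ν)) := by rw [SS.rng_act, ← hs, hμ]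
  have hμ'' : Λ.src μ = Λ.rng (SS.act g⁻¹⁻¹ (Λ.src ν)) := by rw [inv_inv]; exact hμ'
  refine ⟨μ, g, ν, ν, g⁻¹, μ, Λ.src ν, Λ.src ν, hF, hstar,
    ⟨hs, hs, rfl, by rw [Λ.deg_src, add_zero, sup_idem]⟩, hμ', hμ'', ?_⟩
  rw [comp_of_deg_eq_zero (SS.deg_act_src g ν), comp_of_deg_eq_zero (SS.deg_act_src _ ν),
    SS.φ_vtx g _ (Λ.deg_src ν), SS.φ_vtx _ _ (SS.deg_act_src _ ν), mul_inv_cancel]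

end Semigroup

/-- if `(G,Λ)` is `G`-cofinal, then for all idempotents `ι_λ`
and `ι_γ` there exist finitely many `F₁,…,F_l ∈ S_{G,Λ}` such that
`{Fᵢ ι_λ Fᵢ*}` is an outer cover for `ι_γ`. -/
theorem stmt18 (SS : SelfSimilar k G Λ) (hfa : Λ.FinitelyAligned)
    (hcof : GCofinal SS) (lam gam : Λ.Path) :
    ∃ C : Set (Set (Λ.Path × G × Λ.Path)), C.Finite ∧
      (∀ Fi ∈ C, IsElem SS Fi) ∧
      ∀ E', IsIdem SS E' → smul SS (iota Λ G gam) E' = E' → E' ≠ ∅ →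
        ∃ Fi ∈ C,
          smul SS E' (smul SS (smul SS Fi (iota Λ G lam)) (sstar Fi)) ≠ ∅ := by
  set R := {μ | ∃ (g : G) (p : Λ.Path), Λ.rng p = Λ.src lam ∧ Λ.src p = SS.act g (Λ.src μ)}
  obtain ⟨M, hMR, hMfin, hM⟩ : Λ.FinitelyCovered R gam := by
    by_contra hgam
    obtain ⟨x, hx⟩ := exists_boundaryPath_not_finitelyCovered hfa hgam
    obtain ⟨n, hn, g, p, hp, hs⟩ := hcof (Λ.src lam) (Λ.deg_src lam) x
    exact hx n hn (finitelyCovered_of_mem ⟨g, p, hp, hs⟩)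
  have hlink : ∀ μ ∈ M, ∃ (g : G) (ν : Λ.Path),
      Λ.IsPrefix lam ν ∧ Λ.src μ = SS.act g (Λ.src ν) := by
    intro μ hμ
    obtain ⟨g, p, hp, hs⟩ := hMR hμ
    exact ⟨g⁻¹, Λ.comp lam p hp.symm, isPrefix_comp .., by rw [Λ.src_comp, hs, SS.act_inv_act]⟩
  choose! g ν hν hs using hlink
  refine ⟨(fun μ => {(μ, g μ, ν μ)}) '' M, hMfin.image _, ?_, ?_⟩
  · rintro _ ⟨μ, hμ, rfl⟩
    exact isElem_singleton (hs μ hμ)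
  · intro E' hE' hγ hne
    obtain ⟨⟨a, g', b⟩, ht⟩ := Set.nonempty_iff_ne_empty.mpr hne
    obtain ⟨hba, rfl⟩ := hE'.eq_diag_of_mem ht
    subst b
    obtain ⟨μ, hμ, haμ⟩ := hM a (isPrefix_of_mem_of_iota_smul_eq hγ ht)
    have hcover := mem_smul_sstar (mem_smul_iota (hs μ hμ) (hν μ hμ)) (hs μ hμ)
    exact ⟨_, ⟨μ, hμ, rfl⟩,
      (smul_nonempty ht hcover (SS.act_one _).symm (SS.act_one _).symm haμ).ne_empty⟩
end
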